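/- arXiv:2209.05803 — 2 statements merged into one kernel-verified Lean document; each statement's English description precedes it below -/
import Mathlib

section
/- Let S be a special numerical semigroup with genus g > 3 that is neither irreducible nor ordinary. Then S = {0} ∪ {g, g+1, …, g+n-2} ∪ {m : m ≥ g+n} for some n with 2 ≤ n < g-1 (i.e., S is almost-ordinary). -/
open Set

/-- A numerical semigroup: a submonoid of ℕ with finite complement. -/
def IsNumSgp (S : Set ℕ) : Prop :=
  0 ∈ S ∧ (∀ a ∈ S, ∀ b ∈ S, a + b ∈ S) ∧ Sᶜ.Finite

/-- The Frobenius number: the largest gap. -/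
noncomputable def frob (S : Set ℕ) : ℕ := sSup Sᶜ

/-- The multiplicity: the least nonzero element. -/
noncomputable def mult (S : Set ℕ) : ℕ := sInf (S \ {0})

/-- The genus: the number of gaps. -/
noncomputable def genus (S : Set ℕ) : ℕ := Sᶜ.ncard

/-- The number of left elements: elements of S smaller than the Frobenius number. -/
noncomputable def leftEls (S : Set ℕ) : ℕ := {s ∈ S | s < frob S}.ncard

/-- x is a minimal generator of S: nonzero and not a sum of two nonzero elements of S. -/
def IsMinGen (S : Set ℕ) (x : ℕ) : Prop :=
  x ∈ S ∧ x ≠ 0 ∧ ¬ ∃ a ∈ S, ∃ b ∈ S, a ≠ 0 ∧ b ≠ 0 ∧ x = a + b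

/-- The embedding dimension: number of minimal generators. -/
noncomputable def edim (S : Set ℕ) : ℕ := {x | IsMinGen S x}.ncard

/-- The set of special gaps of S. -/
def SG (S : Set ℕ) : Set ℕ :=
  {h | h ∉ S ∧ 2 * h ∈ S ∧ ∀ s ∈ S, s ≠ 0 → h + s ∈ S}

/-- Irreducible numerical semigroup (characterization via special gaps). -/
def IsIrred (S : Set ℕ) : Prop := SG S = {frob S}

/-- Ordinary numerical semigroup. -/
def IsOrdinary (S : Set ℕ) : Prop := ∃ c, S = {0} ∪ {m | c ≤ m}

/-- Special numerical semigroup: every special gap other than F(S) is below the multiplicity. -/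
def IsSpecial (S : Set ℕ) : Prop := ∀ h ∈ SG S, h ≠ frob S → h < mult S

/-- The transform 𝒜, defined on non-special numerical semigroups. -/
noncomputable def Atrans (S : Set ℕ) : Set ℕ :=
  (S ∪ {sSup (SG S \ {frob S})}) \ {mult S}

/-- The sub-Frobenius number: the largest gap different from F(S). -/
noncomputable def subFrob (S : Set ℕ) : ℕ := sSup (Sᶜ \ {frob S})

/-- Almost-ordinary: exactly one gap greater than the multiplicity. -/
noncomputable def IsAlmostOrdinary (S : Set ℕ) : Prop := {h | h ∉ S ∧ mult S < h}.ncard = 1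

/-- The transform ℬ of Bras-Amorós. -/
noncomputable def Btrans (S : Set ℕ) : Set ℕ := (S \ {mult S}) ∪ {subFrob S}

/-!
Let `F` be the Frobenius number, `m` the multiplicity and `h ≠ F` a special gap, so `h < m`.
There is no gap strictly between `m` and `F`: if `f` is the largest one, then either `F - f ∈ S`
or `F = 2f`, and in both cases `F - f ≥ m > h`, so `F - h` is a larger gap below `F`; or else
`f` is itself a special gap above `m`. Hence the gaps are `1, …, m - 1` and `F`, so `g = m`, and
`m < F ≤ 2m - 3` because `F - h` is a gap below `m` and `F ≠ 2h`.
-/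

section Gaps

variable {S : Set ℕ}

theorem le_frob_of_notMem (hfin : Sᶜ.Finite) {x : ℕ} (hx : x ∉ S) : x ≤ frob S :=
  le_csSup hfin.bddAbove hx

theorem frob_notMem (hfin : Sᶜ.Finite) (hne : Sᶜ.Nonempty) : frob S ∉ S :=
  Nat.sSup_mem hne hfin.bddAbove

theorem compl_nonempty_of_frob_ne_zero (hF : frob S ≠ 0) : Sᶜ.Nonempty :=
  Set.nonempty_iff_ne_empty.2 fun h => hF (by rw [frob, h, csSup_empty]; rfl)

theorem le_subFrob_of_notMem (hfin : Sᶜ.Finite) {x : ℕ} (hx : x ∉ S) (hxF : x ≠ frob S) :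
    x ≤ subFrob S :=
  le_csSup (hfin.sdiff).bddAbove ⟨hx, hxF⟩

theorem subFrob_notMem_and_ne_frob (hfin : Sᶜ.Finite) {x : ℕ} (hx : x ∉ S)
    (hxF : x ≠ frob S) : subFrob S ∉ S ∧ subFrob S ≠ frob S :=
  Nat.sSup_mem (s := Sᶜ \ {frob S}) ⟨x, hx, hxF⟩ (hfin.sdiff).bddAbove

theorem mult_le_of_mem {x : ℕ} (hx : x ∈ S) (hx0 : x ≠ 0) : mult S ≤ x :=
  Nat.sInf_le ⟨hx, hx0⟩

theorem notMem_of_lt_mult {x : ℕ} (hx0 : x ≠ 0) (hx : x < mult S) : x ∉ S :=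
  fun hxS => (mult_le_of_mem hxS hx0).not_gt hx

theorem mult_mem_sdiff (hfin : Sᶜ.Finite) : mult S ∈ S \ {0} := by
  have hinf : S.Infinite := by simpa using hfin.infinite_compl
  exact Nat.sInf_mem (hinf.sdiff (Set.finite_singleton 0)).nonempty

theorem sub_notMem_of_mem_SG {h y : ℕ} (hh : h ∈ SG S) (hy : y ∉ S) (hhy : h < y) :
    y - h ∉ S := fun hyh => by
  have hy' := hh.2.2 _ hyh (by omega)
  rw [Nat.add_sub_cancel' hhy.le] at hy'
  exact hy hy'

theorem mem_SG_of_forall_notMem_gt {f x : ℕ} (hf0 : f ≠ 0) (hf : f ∉ S) (hxf : x - f ∉ S)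
    (h2f : 2 * f ≠ x) (hmax : ∀ y ∉ S, f < y → y = x) : f ∈ SG S := by
  refine ⟨hf, ?_, fun s hs hs0 => ?_⟩
  · by_contra h
    exact h2f (hmax _ h (by omega))
  · by_contra h
    have := hmax _ h (by omega)
    exact hxf (by rwa [show x - f = s by omega])

end Gaps

namespace IsNumSgp

variable {S : Set ℕ} (hS : IsNumSgp S)
include hS

theorem frob_mem_SG (hne : Sᶜ.Nonempty) : frob S ∈ SG S := by
  obtain ⟨h0, -, hfin⟩ := hS
  have hF := frob_notMem hfin hne
  have hF0 : frob S ≠ 0 := fun h => hF (h ▸ h0)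
  refine ⟨hF, ?_, fun s _ hs0 => ?_⟩
  · by_contra h2F
    have := le_frob_of_notMem hfin h2F
    omega
  · by_contra hFs
    have := le_frob_of_notMem hfin hFs
    omega

theorem exists_mem_SG_ne_frob (hne : Sᶜ.Nonempty) (hirr : ¬ IsIrred S) :
    ∃ h ∈ SG S, h ≠ frob S := by
  by_contra! h
  exact hirr (Set.eq_singleton_iff_unique_mem.2 ⟨frob_mem_SG hS hne, h⟩)

theorem mult_lt_frob (hord : ¬ IsOrdinary S) : mult S < frob S := by
  have hm := (mult_mem_sdiff hS.2.2).1
  by_contra! hFm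
  refine hord ⟨mult S, Set.ext fun x => ⟨fun hx => ?_, ?_⟩⟩
  · by_cases hx0 : x = 0
    · exact Or.inl hx0
    · exact Or.inr (mult_le_of_mem hx hx0)
  · rintro (rfl | hx)
    · exact hS.1
    · by_contra hxS
      have hxm : mult S ≤ x := hx
      have := le_frob_of_notMem hS.2.2 hxS
      exact hxS ((show x = mult S by omega) ▸ hm)

theorem subFrob_lt_mult (hsp : IsSpecial S) {h : ℕ} (hh : h ∈ SG S) (hhF : h ≠ frob S) :
    subFrob S < mult S := by
  obtain ⟨h0, -, hfin⟩ := hS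
  have hm := (mult_mem_sdiff hfin).1
  have hF := frob_notMem hfin ⟨h, hh.1⟩
  have hhm := hsp h hh hhF
  have hh0 : h ≠ 0 := fun h' => hh.1 (h' ▸ h0)
  obtain ⟨hf, hfF⟩ := subFrob_notMem_and_ne_frob hfin hh.1 hhF
  have hfF' := le_frob_of_notMem hfin hf
  have hmax : ∀ y ∉ S, subFrob S < y → y = frob S := fun y hy hfy => by
    by_contra hyF
    exact (le_subFrob_of_notMem hfin hy hyF).not_gt hfy
  by_contra! hmf
  have hmf' : mult S < subFrob S := lt_of_le_of_ne hmf fun h' => hf (h' ▸ hm)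
  by_cases hsplit : frob S - subFrob S ∈ S ∨ 2 * subFrob S = frob S
  · have hmFf : mult S ≤ frob S - subFrob S := by
      rcases hsplit with hFf | h2f
      · exact mult_le_of_mem hFf (by omega)
      · omega
    have := hmax _ (sub_notMem_of_mem_SG hh hF (by omega)) (by omega)
    omega
  · push Not at hsplit
    have := hsp _ (mem_SG_of_forall_notMem_gt (by omega) hf hsplit.1 hsplit.2 hmax) hfF
    omega

theorem compl_eq_Ico_union_frob (hsp : IsSpecial S) {h : ℕ} (hh : h ∈ SG S)
    (hhF : h ≠ frob S) : Sᶜ = Set.Ico 1 (mult S) ∪ {frob S} := by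
  have hf := subFrob_lt_mult hS hsp hh hhF
  ext x
  simp only [Set.mem_compl_iff, Set.mem_union, Set.mem_Ico, Set.mem_singleton_iff]
  constructor
  · intro hx
    have hx0 : x ≠ 0 := fun h' => hx (h' ▸ hS.1)
    by_cases hxF : x = frob S
    · exact Or.inr hxF
    · have := le_subFrob_of_notMem hS.2.2 hx hxF
      exact Or.inl ⟨by omega, by omega⟩
  · rintro (⟨h1, h2⟩ | rfl)
    · exact notMem_of_lt_mult (by omega) h2
    · exact frob_notMem hS.2.2 ⟨h, hh.1⟩

theorem frob_add_three_le_two_mul_mult (hsp : IsSpecial S) {h : ℕ} (hh : h ∈ SG S)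
    (hhF : h ≠ frob S) : frob S + 3 ≤ 2 * mult S := by
  have hF := frob_notMem hS.2.2 ⟨h, hh.1⟩
  have hhm := hsp h hh hhF
  have hh0 : h ≠ 0 := fun h' => hh.1 (h' ▸ hS.1)
  have hhF' := le_frob_of_notMem hS.2.2 hh.1
  have hFh : frob S - h ∈ Sᶜ := sub_notMem_of_mem_SG hh hF (by omega)
  have h2h : 2 * h ≠ frob S := fun h' => hF (h' ▸ hh.2.1)
  rw [compl_eq_Ico_union_frob hS hsp hh hhF] at hFh
  simp only [Set.mem_union, Set.mem_Ico, Set.mem_singleton_iff] at hFh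
  omega

end IsNumSgp

theorem genus_eq_of_compl_eq_Ico_union {S : Set ℕ} {m F : ℕ} (hc : Sᶜ = Set.Ico 1 m ∪ {F})
    (hm : m ≠ 0) (hmF : m ≤ F) : genus S = m := by
  have hdisj : Disjoint (Set.Ico 1 m) {F} := by
    simp only [disjoint_singleton_right, mem_Ico]
    omega
  rw [genus, hc, Set.ncard_union_eq hdisj, ← Finset.coe_Ico, Set.ncard_coe_finset, Nat.card_Ico,
    Set.ncard_singleton]
  omega

theorem special_is_almost_ordinary_general (S : Set ℕ) (hS : IsNumSgp S) (hsp : IsSpecial S)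
    (hirr : ¬ IsIrred S) (hord : ¬ IsOrdinary S) :
    ∃ n : ℕ, 2 ≤ n ∧ n < genus S - 1 ∧
      S = {0} ∪ {x | genus S ≤ x ∧ x ≤ genus S + n - 2} ∪ {x | genus S + n ≤ x} := by
  have hmF := hS.mult_lt_frob hord
  obtain ⟨h, hh, hhF⟩ :=
    hS.exists_mem_SG_ne_frob (compl_nonempty_of_frob_ne_zero (by omega)) hirr
  have hc := hS.compl_eq_Ico_union_frob hsp hh hhF
  have hg := genus_eq_of_compl_eq_Ico_union hc (mult_mem_sdiff hS.2.2).2 hmF.le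
  have hF := hS.frob_add_three_le_two_mul_mult hsp hh hhF
  refine ⟨frob S - mult S + 1, by omega, by omega, compl_injective ?_⟩
  rw [hc, hg]
  ext x
  simp only [Set.mem_union, Set.mem_Ico, Set.mem_singleton_iff, Set.mem_compl_iff,
    Set.mem_ofPred_eq]
  omega

theorem special_is_almost_ordinary (S : Set ℕ) (hS : IsNumSgp S) (hsp : IsSpecial S)
    (hgen : genus S > 3) (hirr : ¬ IsIrred S) (hord : ¬ IsOrdinary S) :
    ∃ n : ℕ, 2 ≤ n ∧ n < genus S - 1 ∧
      S = {0} ∪ {x | genus S ≤ x ∧ x ≤ genus S + n - 2} ∪ {x | genus S + n ≤ x} :=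
  special_is_almost_ordinary_general S hS hsp hirr hord
end

section
/- Let S be a non-special numerical semigroup, h = max(SG(S) \ {F(S)}), and T = (S ∪ {h}) \ {m(S)}. Then both 2·m(S) and h are minimal generators of T. -/
open Set

/-!
Removing `m = mult S` and adding `h`, the largest special gap other than `F(S)`, leaves a set all
of whose nonzero elements exceed `m` (non-speciality gives `h > m`), so `2m` cannot be a sum of two
of them. And a decomposition `h = a + b` would use summands below `h`, hence in `S`, forcing
`h ∈ S`.
-/

lemma isMinGen_of_le_two_mul_add_one {T : Set ℕ} {m x : ℕ} (hxT : x ∈ T) (hx0 : x ≠ 0)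
    (hT : ∀ a ∈ T, a ≠ 0 → m < a) (hxm : x ≤ 2 * m + 1) : IsMinGen T x := by
  refine ⟨hxT, hx0, ?_⟩
  rintro ⟨a, ha, b, hb, ha0, hb0, rfl⟩
  have := hT a ha ha0
  have := hT b hb hb0
  omega

lemma isMinGen_of_not_mem_of_subset_insert {S T : Set ℕ} {x : ℕ}
    (hadd : ∀ a ∈ S, ∀ b ∈ S, a + b ∈ S) (hxS : x ∉ S) (hTS : T ⊆ insert x S) (hxT : x ∈ T)
    (hx0 : x ≠ 0) : IsMinGen T x := by
  refine ⟨hxT, hx0, ?_⟩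
  rintro ⟨a, ha, b, hb, ha0, hb0, rfl⟩
  have mem_S {c : ℕ} (hc : c ∈ T) (hlt : c < a + b) : c ∈ S :=
    (hTS hc).resolve_left hlt.ne
  exact hxS (hadd a (mem_S ha (by omega)) b (mem_S hb (by omega)))

lemma mult_le {S : Set ℕ} {a : ℕ} (ha : a ∈ S) (ha0 : a ≠ 0) : mult S ≤ a :=
  Nat.sInf_le ⟨ha, ha0⟩

lemma exists_SG_of_not_isSpecial {S : Set ℕ} (hsp : ¬ IsSpecial S) :
    ∃ h ∈ SG S \ {frob S}, mult S ≤ h := by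
  simpa [IsSpecial, and_assoc] using hsp

lemma Atrans_subset_insert (S : Set ℕ) : Atrans S ⊆ insert (sSup (SG S \ {frob S})) S :=
  fun _ ha ↦ ha.1.symm

namespace IsNumSgp

variable {S : Set ℕ}

lemma mult_mem (hS : IsNumSgp S) : mult S ∈ S \ {0} := by
  have hinf : S.Infinite := by simpa using hS.2.2.infinite_compl
  exact Nat.sInf_mem (hinf.sdiff (finite_singleton 0)).nonempty

lemma mult_ne_zero (hS : IsNumSgp S) : mult S ≠ 0 := hS.mult_mem.2

lemma finite_SG_diff (hS : IsNumSgp S) : (SG S \ {frob S}).Finite :=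
  hS.2.2.subset fun _ hx ↦ hx.1.1

lemma sSup_SG_mem (hS : IsNumSgp S) (hsp : ¬ IsSpecial S) :
    sSup (SG S \ {frob S}) ∈ SG S \ {frob S} :=
  let ⟨h, hh, _⟩ := exists_SG_of_not_isSpecial hsp
  Nonempty.csSup_mem ⟨h, hh⟩ hS.finite_SG_diff

/-- Equality is excluded because `mult S ∈ S` while special gaps are gaps. -/
lemma mult_lt_sSup_SG (hS : IsNumSgp S) (hsp : ¬ IsSpecial S) :
    mult S < sSup (SG S \ {frob S}) := by
  obtain ⟨h, hh, hmh⟩ := exists_SG_of_not_isSpecial hsp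
  have hhH : h ≤ sSup (SG S \ {frob S}) := le_csSup hS.finite_SG_diff.bddAbove hh
  refine lt_of_le_of_ne (hmh.trans hhH) fun hmH ↦ (hS.sSup_SG_mem hsp).1.1 ?_
  exact hmH ▸ hS.mult_mem.1

lemma mult_lt_of_mem_Atrans (hS : IsNumSgp S) (hsp : ¬ IsSpecial S) {a : ℕ} (ha : a ∈ Atrans S)
    (ha0 : a ≠ 0) : mult S < a := by
  obtain ⟨haS | rfl, ham⟩ := ha
  · exact lt_of_le_of_ne (mult_le haS ha0) (Ne.symm ham)
  · exact hS.mult_lt_sSup_SG hsp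

lemma two_mul_mult_mem_Atrans (hS : IsNumSgp S) : 2 * mult S ∈ Atrans S := by
  refine ⟨Or.inl ?_, fun h ↦ hS.mult_ne_zero (by simp at h; omega)⟩
  simpa [two_mul] using hS.2.1 _ hS.mult_mem.1 _ hS.mult_mem.1

lemma sSup_SG_mem_Atrans (hS : IsNumSgp S) (hsp : ¬ IsSpecial S) :
    sSup (SG S \ {frob S}) ∈ Atrans S :=
  ⟨Or.inr rfl, (hS.mult_lt_sSup_SG hsp).ne'⟩

end IsNumSgp

theorem Atrans_min_gens (S : Set ℕ) (hS : IsNumSgp S) (hsp : ¬ IsSpecial S) :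
    IsMinGen (Atrans S) (2 * mult S) ∧ IsMinGen (Atrans S) (sSup (SG S \ {frob S})) := by
  have hm0 := hS.mult_ne_zero
  have hmH := hS.mult_lt_sSup_SG hsp
  constructor
  · exact isMinGen_of_le_two_mul_add_one hS.two_mul_mult_mem_Atrans (by omega)
      (fun _ ↦ hS.mult_lt_of_mem_Atrans hsp) (by omega)
  · exact isMinGen_of_not_mem_of_subset_insert hS.2.1 (hS.sSup_SG_mem hsp).1.1
      (Atrans_subset_insert S) (hS.sSup_SG_mem_Atrans hsp) (by omega)
end
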